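/- Let v̄ = (v₀,v) ∈ ℝ×ℝ² with v ≠ 0, and define the three vectors X_a(v̄) = v̄/|v̄|, X_b(v̄) = (|v|/|v̄|, −v₀ v/(|v̄| |v|)), and X_c(v̄) = (0, Jv/|v|), where J(v₁,v₂) = (−v₂,v₁). Then (X_a(v̄), X_b(v̄), X_c(v̄)) is an orthonormal basis of ℝ³ ≅ ℝ×ℝ², and the gradient of the dispersion relation decomposes as ∇ω(v̄) = 3v₀|v̄| · X_a(v̄) + |v||v̄| · X_b(v̄); in particular X_c(v̄) · ∇ω(v̄) = 0. -/

import Mathlib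

noncomputable section

open scoped RealInnerProductSpace

/-- The frequency space `ℝ × ℝ²`, represented as Euclidean `ℝ³`:
coordinate `0` is `v₀` and coordinates `1, 2` form the spatial part `v`. -/
abbrev E3 : Type := EuclideanSpace ℝ (Fin 3)

/-- Build an element of `E3` from its three coordinates. -/
def vec3 (a b c : ℝ) : E3 := WithLp.toLp 2 ![a, b, c]

/-- The norm `|v|` of the spatial part `v = (v₁, v₂)` of `v̄`. -/
def snorm2 (v : E3) : ℝ := Real.sqrt ((v 1) ^ 2 + (v 2) ^ 2)

/-- The gradient of the dispersion relation, `∇ω(v̄) = (3v₀² + |v|², 2v₀v)`. -/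
def gradOmega (v : E3) : E3 :=
  vec3 (3 * (v 0) ^ 2 + (v 1) ^ 2 + (v 2) ^ 2) (2 * v 0 * v 1) (2 * v 0 * v 2)

/-- The radial vector `X_a(v̄) = v̄/|v̄|`. -/
def Xa (v : E3) : E3 := ‖v‖⁻¹ • v

/-- The vector `X_b(v̄) = (|v|/|v̄|, −v₀ v/(|v̄||v|))`. -/
def Xb (v : E3) : E3 :=
  vec3 (snorm2 v / ‖v‖) (-(v 0) * v 1 / (‖v‖ * snorm2 v)) (-(v 0) * v 2 / (‖v‖ * snorm2 v))

/-- The angular vector `X_c(v̄) = (0, Jv/|v|)` with `J(v₁,v₂) = (−v₂,v₁)`. -/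
def Xc (v : E3) : E3 := vec3 0 (-(v 2) / snorm2 v) (v 1 / snorm2 v)

/-! Up to the sign of `X_b`, `(X_a, X_b, X_c)` is the unit spherical frame `(e_r, e_θ, e_φ)` with
polar axis `v₀`, where `cos θ = v₀/|v̄|` and `sin θ = |v|/|v̄|`. The gradient
`∇ω = (3v₀² + |v|², 2v₀v)` lies in the plane spanned by `(1, 0)` and `(0, v)`, hence is orthogonal
to `X_c = (0, Jv/|v|)`; its `X_a`- and `X_b`-components are read off coordinatewise using
`|v̄|² = v₀² + |v|²`. -/

theorem orthonormal_vecCons_three {F : Type*} [NormedAddCommGroup F] [InnerProductSpace ℝ F]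
    {a b c : F} (ha : ‖a‖ = 1) (hb : ‖b‖ = 1) (hc : ‖c‖ = 1)
    (hab : ⟪a, b⟫ = 0) (hac : ⟪a, c⟫ = 0) (hbc : ⟪b, c⟫ = 0) :
    Orthonormal ℝ ![a, b, c] := by
  rw [orthonormal_iff_ite]
  intro i j
  fin_cases i <;> fin_cases j <;>
    simp [real_inner_comm, ha, hb, hc, hab, hac, hbc]

@[simp] lemma vec3_apply_zero (a b c : ℝ) : vec3 a b c 0 = a := rfl
@[simp] lemma vec3_apply_one (a b c : ℝ) : vec3 a b c 1 = b := rfl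
@[simp] lemma vec3_apply_two (a b c : ℝ) : vec3 a b c 2 = c := rfl

@[simp] lemma Xa_apply (v : E3) (i : Fin 3) : Xa v i = ‖v‖⁻¹ * v i := rfl

lemma inner_eq_sum_three (x y : E3) : ⟪x, y⟫ = x 0 * y 0 + x 1 * y 1 + x 2 * y 2 := by
  simp [PiLp.inner_apply, Fin.sum_univ_three, mul_comm]

lemma norm_sq_eq_sum_three (v : E3) : ‖v‖ ^ 2 = v 0 ^ 2 + v 1 ^ 2 + v 2 ^ 2 := by
  rw [← real_inner_self_eq_norm_sq, inner_eq_sum_three]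
  ring

lemma snorm2_sq (v : E3) : snorm2 v ^ 2 = v 1 ^ 2 + v 2 ^ 2 :=
  Real.sq_sqrt (by positivity)

lemma snorm2_pos {v : E3} (hv : ¬(v 1 = 0 ∧ v 2 = 0)) : 0 < snorm2 v := by
  refine Real.sqrt_pos.mpr ?_
  rcases not_and_or.mp hv with h | h <;> positivity

lemma snorm2_le_norm (v : E3) : snorm2 v ≤ ‖v‖ := by
  rw [snorm2, Real.sqrt_le_iff]
  exact ⟨norm_nonneg v, by nlinarith [norm_sq_eq_sum_three v, sq_nonneg (v 0)]⟩

lemma norm_pos_of_snorm2_pos {v : E3} (hs : 0 < snorm2 v) : 0 < ‖v‖ :=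
  hs.trans_le (snorm2_le_norm v)

lemma inner_Xa_Xc (v : E3) : ⟪Xa v, Xc v⟫ = 0 := by
  simp only [inner_eq_sum_three, Xa_apply, Xc, vec3_apply_zero, vec3_apply_one, vec3_apply_two]
  ring

lemma inner_Xb_Xc (v : E3) : ⟪Xb v, Xc v⟫ = 0 := by
  simp only [inner_eq_sum_three, Xb, Xc, vec3_apply_zero, vec3_apply_one, vec3_apply_two]
  ring

section Frame

variable {v : E3}

lemma norm_Xa (hv : v ≠ 0) : ‖Xa v‖ = 1 :=
  norm_smul_inv_norm hv

lemma norm_Xb (hs : 0 < snorm2 v) : ‖Xb v‖ = 1 := by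
  rw [← pow_eq_one_iff_of_nonneg (norm_nonneg _) two_ne_zero, ← real_inner_self_eq_norm_sq,
    inner_eq_sum_three]
  simp only [Xb, vec3_apply_zero, vec3_apply_one, vec3_apply_two]
  have hn := norm_pos_of_snorm2_pos hs
  field_simp
  linear_combination (snorm2 v ^ 2 - v 0 ^ 2) * snorm2_sq v - snorm2 v ^ 2 * norm_sq_eq_sum_three v

lemma norm_Xc (hs : 0 < snorm2 v) : ‖Xc v‖ = 1 := by
  rw [← pow_eq_one_iff_of_nonneg (norm_nonneg _) two_ne_zero, ← real_inner_self_eq_norm_sq,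
    inner_eq_sum_three]
  simp only [Xc, vec3_apply_zero, vec3_apply_one, vec3_apply_two]
  field_simp
  linear_combination -snorm2_sq v

lemma inner_Xa_Xb (hs : 0 < snorm2 v) : ⟪Xa v, Xb v⟫ = 0 := by
  simp only [inner_eq_sum_three, Xa_apply, Xb, vec3_apply_zero, vec3_apply_one, vec3_apply_two]
  have hn := norm_pos_of_snorm2_pos hs
  field_simp
  linear_combination v 0 * snorm2_sq v

lemma orthonormal_Xa_Xb_Xc (hs : 0 < snorm2 v) : Orthonormal ℝ ![Xa v, Xb v, Xc v] :=
  orthonormal_vecCons_three (norm_Xa (norm_pos_iff.mp (norm_pos_of_snorm2_pos hs)))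
    (norm_Xb hs) (norm_Xc hs) (inner_Xa_Xb hs) (inner_Xa_Xc v) (inner_Xb_Xc v)

lemma gradOmega_eq (hs : 0 < snorm2 v) :
    gradOmega v = (3 * v 0 * ‖v‖) • Xa v + (snorm2 v * ‖v‖) • Xb v := by
  have hn := norm_pos_of_snorm2_pos hs
  ext i
  fin_cases i <;> simp [gradOmega, Xb, vec3] <;> field_simp
  · linear_combination -snorm2_sq v
  all_goals ring

end Frame

/-- for `v ≠ 0`, `(X_a(v̄), X_b(v̄), X_c(v̄))` is an orthonormal basis of
`ℝ³ ≅ ℝ×ℝ²`, the gradient of the dispersion relation decomposes as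
`∇ω(v̄) = 3v₀|v̄|·X_a(v̄) + |v||v̄|·X_b(v̄)`, and in particular `X_c(v̄)·∇ω(v̄) = 0`. -/
theorem stmt_7 (v : E3) (hv : ¬(v 1 = 0 ∧ v 2 = 0)) :
    Orthonormal ℝ ![Xa v, Xb v, Xc v] ∧
    Submodule.span ℝ (Set.range ![Xa v, Xb v, Xc v]) = ⊤ ∧
    gradOmega v = (3 * v 0 * ‖v‖) • Xa v + (snorm2 v * ‖v‖) • Xb v ∧
    ⟪Xc v, gradOmega v⟫ = 0 := by
  have hs := snorm2_pos hv
  have horth := orthonormal_Xa_Xb_Xc hs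
  refine ⟨horth, horth.linearIndependent.span_eq_top_of_card_eq_finrank (by simp),
    gradOmega_eq hs, ?_⟩
  rw [gradOmega_eq hs, inner_add_right, real_inner_smul_right, real_inner_smul_right,
    real_inner_comm, inner_Xa_Xc, real_inner_comm, inner_Xb_Xc]
  ring
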